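/- Fix an even population size N and an even m with 2 ≤ m ≤ N. Define the relative regret of the empirical success rule at (μ1, μ0) ∈ [0,1]² with max{μ1, μ0} > 0 by RReg(m, μ1, μ0) := (|μ1 − μ0| / max{μ1, μ0}) · [ m/(2N) + (1 − m/N)·e(m, μ1, μ0) ]. Then lim_{ε ↓ 0} RReg(m, ε, 0) = 1/2; in particular the limit does not depend on m. -/
import Mathlib


open Finset

/-- Binomial pmf: probability that `Binomial(n, p)` equals `k`. -/
noncomputable def binomPMF (n : ℕ) (p : ℝ) (k : ℕ) : ℝ :=
  (n.choose k : ℝ) * p ^ k * (1 - p) ^ (n - k)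

/-- `P(X < Y)` for independent `X ~ Binomial(n, p)` and `Y ~ Binomial(n, q)`. -/
noncomputable def probLT (n : ℕ) (p q : ℝ) : ℝ :=
  ∑ i ∈ Finset.range (n + 1), ∑ j ∈ Finset.range (n + 1),
    if i < j then binomPMF n p i * binomPMF n q j else 0

/-- `P(X = Y)` for independent `X ~ Binomial(n, p)` and `Y ~ Binomial(n, q)`. -/
noncomputable def probEQ (n : ℕ) (p q : ℝ) : ℝ :=
  ∑ i ∈ Finset.range (n + 1), binomPMF n p i * binomPMF n q i

/-- `P(X > Y)` for independent `X ~ Binomial(n, p)` and `Y ~ Binomial(n, q)`. -/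
noncomputable def probGT (n : ℕ) (p q : ℝ) : ℝ :=
  ∑ i ∈ Finset.range (n + 1), ∑ j ∈ Finset.range (n + 1),
    if j < i then binomPMF n p i * binomPMF n q j else 0

/-- Tie-adjusted rollout error probability `e(m, μ1, μ0)` of the empirical success
rule, for a matched-pairs experiment of even size `m` with `n = m/2` observations
per arm. -/
noncomputable def errProb (m : ℕ) (μ1 μ0 : ℝ) : ℝ :=
  if μ0 < μ1 then probLT (m / 2) μ1 μ0 + (1 / 2) * probEQ (m / 2) μ1 μ0
  else if μ1 = μ0 then 1 / 2
  else probGT (m / 2) μ1 μ0 + (1 / 2) * probEQ (m / 2) μ1 μ0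

/-- The marginal cost–benefit ratio `η(m, μ1, μ0)` for population size `N`. -/
noncomputable def eta (N m : ℕ) (μ1 μ0 : ℝ) : ℝ :=
  ((N : ℝ) - (m : ℝ)) * errProb m μ1 μ0 - ((N : ℝ) - (m : ℝ) - 2) * errProb (m + 2) μ1 μ0

/-- Relative regret of the empirical success rule, i.e. the finite-population
regret normalized by the oracle welfare `N · max{μ1, μ0}`. -/
noncomputable def RReg (N m : ℕ) (μ1 μ0 : ℝ) : ℝ :=
  (|μ1 - μ0| / max μ1 μ0) *
    ((m : ℝ) / (2 * (N : ℝ)) + (1 - (m : ℝ) / (N : ℝ)) * errProb m μ1 μ0)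

open Filter

/-- Degeneracy of relative regret: along the boundary states `(ε, 0)` with
`ε ↓ 0`, the relative regret tends to `1/2`, independently of the experimental
sample size `m`. -/
theorem relative_regret_limit_half (N m : ℕ) (hN : Even N) (hm : Even m)
    (h2 : 2 ≤ m) (hmN : m ≤ N) :
    Tendsto (fun ε : ℝ => RReg N m ε 0) (nhdsWithin 0 (Set.Ioi 0))
      (nhds (1 / 2)) := by

  have hNpos : 0 < N := lt_of_lt_of_le (by norm_num) (le_trans h2 hmN)
  have hN0 : (N : ℝ) ≠ 0 := Nat.cast_ne_zero.mpr hNpos.ne'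
  set n := m / 2 with hn
  have key : ∀ ε : ℝ, 0 < ε → RReg N m ε 0 =
      (m : ℝ) / (2 * N) + (1 - (m : ℝ) / N) * (1 / 2 * (1 - ε) ^ n) := by
    intro ε hε
    have hLT : probLT n ε 0 = 0 := by
      unfold probLT
      apply Finset.sum_eq_zero; intro i _
      apply Finset.sum_eq_zero; intro j _
      split_ifs with h
      · have hj : j ≠ 0 := by omega
        simp [binomPMF, zero_pow hj]
      · rfl
    have hEQ : probEQ n ε 0 = (1 - ε) ^ n := by
      unfold probEQ
      rw [Finset.sum_eq_single 0]
      · simp [binomPMF]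
      · intro i _ hi; simp [binomPMF, zero_pow hi]
      · simp
    have h1 : errProb m ε 0 = 1 / 2 * (1 - ε) ^ n := by
      simp only [errProb, if_pos hε, ← hn, hLT, hEQ, zero_add]
    unfold RReg
    rw [h1]
    have hr : |ε - (0:ℝ)| / max ε 0 = 1 := by
      rw [sub_zero, abs_of_pos hε, max_eq_left hε.le, div_self hε.ne']
    rw [hr, one_mul]
  have hcont : Tendsto (fun ε : ℝ => (m : ℝ) / (2 * N) + (1 - (m : ℝ) / N) * (1 / 2 * (1 - ε) ^ n))
      (nhdsWithin 0 (Set.Ioi 0)) (nhds (1 / 2)) := by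
    have hc : Tendsto (fun ε : ℝ => (m : ℝ) / (2 * N) + (1 - (m : ℝ) / N) * (1 / 2 * (1 - ε) ^ n))
        (nhds 0) (nhds ((m : ℝ) / (2 * N) + (1 - (m : ℝ) / N) * (1 / 2 * (1 - 0) ^ n))) := by
      apply Continuous.tendsto
      continuity
    have heq : (m : ℝ) / (2 * N) + (1 - (m : ℝ) / N) * (1 / 2 * (1 - (0:ℝ)) ^ n) = 1 / 2 := by
      field_simp
      ring
    rw [heq] at hc
    exact hc.mono_left nhdsWithin_le_nhds
  exact hcont.congr' (by filter_upwards [self_mem_nhdsWithin] with ε hε using (key ε hε).symm)
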